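/- Let ψ(z) = z - 1/z, λ_n and ρ_{n,N} as above. For 1 ≤ N ≤ n and 0 < c ≤ 1, the (n−N)-fold iterate ψ^{∘(n-N)} maps the open disc D(λ_n, c ρ_{n,N}) into the open disc D(λ_N, c λ_N) (and in particular avoids 0 at every intermediate step). -/

import Mathlib

noncomputable def lam : ℕ → ℝ
  | 0 => 0
  | n + 1 => (lam n + Real.sqrt (lam n ^ 2 + 4)) / 2

noncomputable def psiC (z : ℂ) : ℂ := z - 1 / z

/-!
`λ_{n+1}` is the positive solution of `ψ(x) = λ_n`, so `ψ` maps `λ_{m+1}` to `λ_m`. Near a positive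
real point `L`, `ψ(z) - ψ(L) = (z - L)(1 + 1/(zL))`; if `z` lies in the disc of radius `c (L - a)`
around `L` then `|z| > a`, so the expansion factor is at most `1 + 1/(aL)`, which is exactly the
factor relating `ψ(L) - ψ(a)` to `L - a`. Hence one application of `ψ` maps
`D(λ_{m+1}, c(λ_{m+1} - λ_{j+1}))` into `D(λ_m, c(λ_m - λ_j))`, and iterating `n - N` times
lands in `D(λ_N, c(λ_N - λ_0)) = D(λ_N, c λ_N)`.
-/

theorem sub_one_div_sub_sub_one_div {K : Type*} [Field K] {z w : K} (hz : z ≠ 0) (hw : w ≠ 0) :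
    (z - 1 / z) - (w - 1 / w) = (z - w) * (1 + 1 / (z * w)) := by
  field_simp
  ring

theorem lt_norm_of_norm_sub_lt {a L c : ℝ} (haL : a ≤ L) (hc : c ≤ 1) {z : ℂ}
    (hz : ‖z - L‖ < c * (L - a)) : a < ‖z‖ := by
  have hL : L ≤ ‖z‖ + ‖z - L‖ :=
    (le_abs_self L).trans (by simpa using norm_le_norm_add_norm_sub z (L : ℂ))
  nlinarith

theorem norm_psiC_sub_lt {a L c : ℝ} (ha : 0 < a) (haL : a ≤ L) (hc : c ≤ 1) {z : ℂ}
    (hz : ‖z - L‖ < c * (L - a)) :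
    ‖psiC z - ((L - 1 / L : ℝ) : ℂ)‖ < c * ((L - 1 / L) - (a - 1 / a)) := by
  have hL : 0 < L := ha.trans_le haL
  have hza : a < ‖z‖ := lt_norm_of_norm_sub_lt haL hc hz
  have hz0 : z ≠ 0 := norm_pos_iff.mp (ha.trans hza)
  have hfactor : ‖1 + 1 / (z * L)‖ ≤ 1 + 1 / (a * L) :=
    calc ‖1 + 1 / (z * L)‖ ≤ 1 + ‖1 / (z * L)‖ := by simpa using norm_add_le (1 : ℂ) (1 / (z * L))
      _ = 1 + 1 / (‖z‖ * L) := by simp [abs_of_pos hL]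
      _ ≤ 1 + 1 / (a * L) := by gcongr
  have hLC : (L : ℂ) ≠ 0 := by exact_mod_cast hL.ne'
  calc ‖psiC z - ((L - 1 / L : ℝ) : ℂ)‖ = ‖z - L‖ * ‖1 + 1 / (z * L)‖ := by
        rw [psiC, ← norm_mul, ← sub_one_div_sub_sub_one_div hz0 hLC]
        push_cast
        rfl
    _ ≤ ‖z - L‖ * (1 + 1 / (a * L)) := by gcongr
    _ < c * (L - a) * (1 + 1 / (a * L)) := by gcongr
    _ = c * ((L - 1 / L) - (a - 1 / a)) := by
        rw [sub_one_div_sub_sub_one_div hL.ne' ha.ne', mul_comm L a]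
        ring

theorem lam_nonneg (n : ℕ) : 0 ≤ lam n := by
  induction n with
  | zero => simp [lam]
  | succ n ih => simp only [lam]; positivity

theorem lam_succ_pos (n : ℕ) : 0 < lam (n + 1) := by
  have := lam_nonneg n
  simp only [lam]
  positivity

theorem lam_succ_sub_one_div (n : ℕ) : lam (n + 1) - 1 / lam (n + 1) = lam n := by
  have hsqrt : Real.sqrt (lam n ^ 2 + 4) ^ 2 = lam n ^ 2 + 4 := Real.sq_sqrt (by positivity)
  have hpos := lam_succ_pos n
  rw [sub_eq_iff_eq_add, ← sub_eq_iff_eq_add', eq_div_iff hpos.ne']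
  simp only [lam] at hpos ⊢
  nlinarith

theorem lam_monotone : Monotone lam := by
  refine monotone_nat_of_le_succ fun n => ?_
  have := lam_succ_pos n
  rw [← lam_succ_sub_one_div n, sub_le_self_iff]
  positivity

theorem ne_zero_and_norm_psiC_sub_lam_lt {j m : ℕ} (hjm : j ≤ m) {c : ℝ} (hc : c ≤ 1) {z : ℂ}
    (hz : ‖z - lam (m + 1)‖ < c * (lam (m + 1) - lam (j + 1))) :
    z ≠ 0 ∧ ‖psiC z - lam m‖ < c * (lam m - lam j) := by
  have hjm' : lam (j + 1) ≤ lam (m + 1) := lam_monotone (by omega)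
  refine ⟨norm_pos_iff.mp ((lam_succ_pos j).trans (lt_norm_of_norm_sub_lt hjm' hc hz)), ?_⟩
  simpa only [lam_succ_sub_one_div] using norm_psiC_sub_lt (lam_succ_pos j) hjm' hc hz

theorem iterate_psiC_of_norm_sub_lam_lt (N : ℕ) {c : ℝ} (hc : c ≤ 1) (j : ℕ) {z : ℂ}
    (hz : ‖z - lam (N + j)‖ < c * (lam (N + j) - lam j)) :
    (∀ k < j, psiC^[k] z ≠ 0) ∧ ‖psiC^[j] z - lam N‖ < c * lam N := by
  induction j generalizing z with
  | zero => simpa [lam] using hz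
  | succ j ih =>
    obtain ⟨hz0, hψz⟩ := ne_zero_and_norm_psiC_sub_lam_lt (Nat.le_add_left j N) hc hz
    obtain ⟨hne, hlt⟩ := ih hψz
    refine ⟨?_, by rwa [Function.iterate_succ_apply]⟩
    rintro (_ | k) hk
    · exact hz0
    · rw [Function.iterate_succ_apply]
      exact hne k (by omega)

theorem stmt_13_general (N n : ℕ) (hn : N ≤ n) (c : ℝ) (hc1 : c ≤ 1)
    (z : ℂ) (hz : ‖z - lam n‖ < c * (lam n - lam (n - N))) :
    (∀ k < n - N, psiC^[k] z ≠ 0) ∧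
      ‖psiC^[n - N] z - lam N‖ < c * lam N := by
  obtain ⟨j, rfl⟩ := Nat.exists_eq_add_of_le hn
  rw [Nat.add_sub_cancel_left] at hz ⊢
  exact iterate_psiC_of_norm_sub_lam_lt N hc1 j hz

theorem stmt_13 (N n : ℕ) (hN : 1 ≤ N) (hn : N ≤ n) (c : ℝ) (hc0 : 0 < c) (hc1 : c ≤ 1)
    (z : ℂ) (hz : ‖z - lam n‖ < c * (lam n - lam (n - N))) :
    (∀ k < n - N, psiC^[k] z ≠ 0) ∧
      ‖psiC^[n - N] z - lam N‖ < c * lam N :=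
  stmt_13_general N n hn c hc1 z hz
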